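/- Let K ⊆ ℝⁿ be a nonempty closed convex set, a ∈ K, and v ∈ ℝⁿ. Then the one-sided limit lim_{δ→0⁺}(Ψ_K(a + δv) − a)/δ exists; that is, there is a (unique) w ∈ ℝⁿ such that (Ψ_K(a + δv) − a)/δ → w as δ → 0⁺, so that the vector field projection Π_K[a,v] is well defined. -/

import Mathlib

open Filter Set

/-- Metric projection onto a set: the nearest point of `K` to `y`
(well defined when `K` is nonempty, closed and convex). -/
noncomputable def metricProj {E : Type*} [NormedAddCommGroup E] [InnerProductSpace ℝ E]
    (K : Set E) (y : E) : E :=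
  Classical.epsilon fun p => p ∈ K ∧ ∀ z ∈ K, ‖y - p‖ ≤ ‖y - z‖

open InnerProductSpace Topology

/-!
Write `q δ = δ⁻¹ • (Ψ_K(a + δ • v) - a)`, so that `Ψ_K(a + δ • v) = a + δ • q δ`. For
`0 < δ ≤ δ'` the point `a + δ • q δ'` lies on the segment from `a` to `Ψ_K(a + δ' • v)`, hence
in `K`, and testing the variational inequality of `Ψ_K(a + δ • v)` against it gives
`⟪v - q δ, q δ' - q δ⟫ ≤ 0`, i.e. `‖q δ' - q δ‖² ≤ ‖v - q δ'‖² - ‖v - q δ‖²`.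
So `δ ↦ ‖v - q δ‖²` is monotone and nonnegative, hence converges as `δ → 0⁺`, and the
estimate makes `q` Cauchy there.
-/

theorem cauchy_map_of_dist_sq_le_abs_sub {α β : Type*} [PseudoMetricSpace α] {l : Filter β}
    [l.NeBot] {f : β → α} {h : β → ℝ} {L : ℝ} (hh : Tendsto h l (𝓝 L))
    (hfh : ∀ᶠ p in l ×ˢ l, dist (f p.1) (f p.2) ^ 2 ≤ |h p.1 - h p.2|) :
    Cauchy (map f l) := by
  refine cauchy_map_iff'.2 (tendsto_uniformity_iff_dist_tendsto_zero.2 ?_)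
  have hbound : Tendsto (fun p : β × β => √|h p.1 - h p.2|) (l ×ˢ l) (𝓝 0) := by
    simpa using ((hh.comp tendsto_fst).sub (hh.comp tendsto_snd)).abs.sqrt
  refine squeeze_zero' (Eventually.of_forall fun _ => dist_nonneg) ?_ hbound
  filter_upwards [hfh] with p hp
  exact Real.le_sqrt_of_sq_le hp

theorem exists_tendsto_nhdsGT_of_dist_sq_le_sub {α : Type*} [PseudoMetricSpace α]
    [CompleteSpace α] {f : ℝ → α} {h : ℝ → ℝ} {x : ℝ} (hbdd : BddBelow (h '' Ioi x))
    (hfh : ∀ s ∈ Ioi x, ∀ t ∈ Ioi x, s ≤ t → dist (f s) (f t) ^ 2 ≤ h t - h s) :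
    ∃ w, Tendsto f (𝓝[>] x) (𝓝 w) := by
  have hmono : MonotoneOn h (Ioi x) := fun s hs t ht hst =>
    sub_nonneg.1 ((sq_nonneg _).trans (hfh s hs t ht hst))
  have hfh' : ∀ᶠ p in 𝓝[>] x ×ˢ 𝓝[>] x, dist (f p.1) (f p.2) ^ 2 ≤ |h p.1 - h p.2| := by
    filter_upwards [prod_mem_prod self_mem_nhdsWithin self_mem_nhdsWithin]
    rintro ⟨s, t⟩ ⟨hs, ht⟩
    rcases le_total s t with hst | hts
    · simpa [abs_sub_comm] using (hfh s hs t ht hst).trans (le_abs_self _)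
    · simpa [dist_comm] using (hfh t ht s hs hts).trans (le_abs_self _)
  exact cauchy_map_iff_exists_tendsto.1
    (cauchy_map_of_dist_sq_le_abs_sub (hmono.tendsto_nhdsGT hbdd) hfh')

theorem norm_sq_add_norm_sq_le_norm_sub_sq_of_inner_nonpos {E : Type*} [NormedAddCommGroup E]
    [InnerProductSpace ℝ E] {u x : E} (h : ⟪u, x⟫_ℝ ≤ 0) :
    ‖u‖ ^ 2 + ‖x‖ ^ 2 ≤ ‖u - x‖ ^ 2 := by
  rw [norm_sub_sq_real]
  linarith

theorem norm_sub_eq_iInf_iff_forall_norm_sub_le {E : Type*} [SeminormedAddCommGroup E]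
    {K : Set E} {y p : E} (hp : p ∈ K) :
    ‖y - p‖ = ⨅ z : K, ‖y - z‖ ↔ ∀ z ∈ K, ‖y - p‖ ≤ ‖y - z‖ := by
  have : Nonempty K := ⟨⟨p, hp⟩⟩
  have hbdd : BddBelow (range fun z : K => ‖y - z‖) :=
    ⟨0, by rintro _ ⟨z, rfl⟩; exact norm_nonneg _⟩
  refine ⟨fun h z hz => h ▸ ciInf_le hbdd ⟨z, hz⟩, fun h => ?_⟩
  exact le_antisymm (le_ciInf fun z => h z z.2) (ciInf_le hbdd ⟨p, hp⟩)

section MetricProj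

variable {E : Type*} [NormedAddCommGroup E] [InnerProductSpace ℝ E] {K : Set E}
  (hne : K.Nonempty) (hc : IsComplete K) (hcv : Convex ℝ K)
include hne hc hcv

theorem metricProj_mem_and_le (y : E) :
    metricProj K y ∈ K ∧ ∀ z ∈ K, ‖y - metricProj K y‖ ≤ ‖y - z‖ := by
  obtain ⟨p, hp, hmin⟩ := exists_norm_eq_iInf_of_complete_convex hne hc hcv y
  exact Classical.epsilon_spec (p := fun p => p ∈ K ∧ ∀ z ∈ K, ‖y - p‖ ≤ ‖y - z‖)
    ⟨p, hp, (norm_sub_eq_iInf_iff_forall_norm_sub_le hp).1 hmin⟩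

theorem metricProj_mem (y : E) : metricProj K y ∈ K :=
  (metricProj_mem_and_le hne hc hcv y).1

theorem real_inner_sub_metricProj_nonpos (y : E) {z : E} (hz : z ∈ K) :
    ⟪y - metricProj K y, z - metricProj K y⟫_ℝ ≤ 0 := by
  obtain ⟨hmem, hle⟩ := metricProj_mem_and_le hne hc hcv y
  exact (norm_eq_iInf_iff_real_inner_le_zero hcv hmem).1
    ((norm_sub_eq_iInf_iff_forall_norm_sub_le hmem).2 hle) z hz

end MetricProj

section ProjDiffQuot

variable {E : Type*} [NormedAddCommGroup E] [InnerProductSpace ℝ E] {K : Set E} {a : E}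

noncomputable def projDiffQuot (K : Set E) (a v : E) (δ : ℝ) : E :=
  δ⁻¹ • (metricProj K (a + δ • v) - a)

theorem metricProj_eq_add_smul_projDiffQuot (v : E) {δ : ℝ} (hδ : δ ≠ 0) :
    metricProj K (a + δ • v) = a + δ • projDiffQuot K a v δ := by
  rw [projDiffQuot, smul_smul, mul_inv_cancel₀ hδ, one_smul, add_sub_cancel]

variable (hc : IsComplete K) (hcv : Convex ℝ K) (ha : a ∈ K) (v : E)
include hc hcv ha

theorem add_smul_projDiffQuot_mem {δ δ' : ℝ} (hδ : 0 < δ) (hδδ' : δ ≤ δ') :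
    a + δ • projDiffQuot K a v δ' ∈ K := by
  have hδ' : 0 < δ' := hδ.trans_le hδδ'
  have hseg : a + δ • projDiffQuot K a v δ' =
      a + (δ / δ') • (metricProj K (a + δ' • v) - a) := by
    rw [projDiffQuot, smul_smul, div_eq_mul_inv]
  rw [hseg]
  exact hcv.add_smul_sub_mem ha (metricProj_mem ⟨a, ha⟩ hc hcv _)
    ⟨(div_pos hδ hδ').le, (div_le_one hδ').2 hδδ'⟩

theorem real_inner_sub_projDiffQuot_nonpos {δ δ' : ℝ} (hδ : 0 < δ) (hδδ' : δ ≤ δ') :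
    ⟪v - projDiffQuot K a v δ, projDiffQuot K a v δ' - projDiffQuot K a v δ⟫_ℝ ≤ 0 := by
  have hvar := real_inner_sub_metricProj_nonpos ⟨a, ha⟩ hc hcv (a + δ • v)
    (add_smul_projDiffQuot_mem hc hcv ha v hδ hδδ')
  rw [metricProj_eq_add_smul_projDiffQuot v hδ.ne', add_sub_add_left_eq_sub,
    add_sub_add_left_eq_sub, ← smul_sub, ← smul_sub, real_inner_smul_left,
    real_inner_smul_right, ← mul_assoc] at hvar
  exact nonpos_of_mul_nonpos_right hvar (mul_pos hδ hδ)

theorem dist_projDiffQuot_sq_le {δ δ' : ℝ} (hδ : 0 < δ) (hδδ' : δ ≤ δ') :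
    dist (projDiffQuot K a v δ) (projDiffQuot K a v δ') ^ 2 ≤
      ‖v - projDiffQuot K a v δ'‖ ^ 2 - ‖v - projDiffQuot K a v δ‖ ^ 2 := by
  have h := norm_sq_add_norm_sq_le_norm_sub_sq_of_inner_nonpos
    (real_inner_sub_projDiffQuot_nonpos hc hcv ha v hδ hδδ')
  rw [sub_sub_sub_cancel_right] at h
  rw [dist_comm, dist_eq_norm]
  linarith

end ProjDiffQuot

theorem exists_tendsto_projDiffQuot {E : Type*} [NormedAddCommGroup E] [InnerProductSpace ℝ E]
    [CompleteSpace E] {K : Set E} (hcl : IsClosed K) (hcv : Convex ℝ K) {a : E} (ha : a ∈ K)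
    (v : E) : ∃ w, Tendsto (projDiffQuot K a v) (𝓝[>] 0) (𝓝 w) :=
  exists_tendsto_nhdsGT_of_dist_sq_le_sub (h := fun δ => ‖v - projDiffQuot K a v δ‖ ^ 2)
    ⟨0, by rintro _ ⟨δ, -, rfl⟩; positivity⟩
    fun _ hs _ _ hst => dist_projDiffQuot_sq_le hcl.isComplete hcv ha v hs hst

theorem vfProj_exists_general
    {n : ℕ} (K : Set (EuclideanSpace ℝ (Fin n)))
    (hKcl : IsClosed K) (hKcv : Convex ℝ K)
    (a : EuclideanSpace ℝ (Fin n)) (ha : a ∈ K) (v : EuclideanSpace ℝ (Fin n)) :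
    ∃ w : EuclideanSpace ℝ (Fin n),
      Tendsto (fun δ : ℝ => δ⁻¹ • (metricProj K (a + δ • v) - a))
        (nhdsWithin 0 (Set.Ioi 0)) (nhds w) :=
  exists_tendsto_projDiffQuot hKcl hKcv ha v

/-- **Existence of the vector field projection.** For a nonempty closed convex `K ⊆ ℝⁿ`,
`a ∈ K` and `v ∈ ℝⁿ`, the one-sided limit `Π_K[a,v] = lim_{δ→0⁺} (Ψ_K(a + δ v) - a)/δ`
exists, i.e. there is `w` such that `(Ψ_K(a + δ v) - a)/δ → w` as `δ → 0⁺`. -/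
theorem vfProj_exists
    {n : ℕ} (K : Set (EuclideanSpace ℝ (Fin n)))
    (hKne : K.Nonempty) (hKcl : IsClosed K) (hKcv : Convex ℝ K)
    (a : EuclideanSpace ℝ (Fin n)) (ha : a ∈ K) (v : EuclideanSpace ℝ (Fin n)) :
    ∃ w : EuclideanSpace ℝ (Fin n),
      Tendsto (fun δ : ℝ => δ⁻¹ • (metricProj K (a + δ • v) - a))
        (nhdsWithin 0 (Set.Ioi 0)) (nhds w) :=
  vfProj_exists_general K hKcl hKcv a ha v
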